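/- Let G be a connected graph and M a minimal MEG-set of G (minimal meaning no proper subset of M is a MEG-set). If G has at least 3 vertices, then M contains no vertex that is the unique neighbor of a degree-1 vertex. -/

import Mathlib

open SimpleGraph

/-- A pair `{x, y}` monitors the edge `e` if `e` lies on every shortest path
between `x` and `y` in `G`. -/
def Monitors {V : Type*} (G : SimpleGraph V) (x y : V) (e : Sym2 V) : Prop :=
  ∀ p : G.Walk x y, p.IsPath → p.length = G.dist x y → e ∈ p.edges

/-- `M` is a monitoring edge-geodetic set of `G` if every edge of `G` is
monitored by some pair of vertices of `M`. -/
def IsMEGSet {V : Type*} (G : SimpleGraph V) (M : Set V) : Prop :=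
  ∀ e ∈ G.edgeSet, ∃ x ∈ M, ∃ y ∈ M, Monitors G x y e

/-!
Let `u` be a leaf with neighbour `v`. Every nontrivial walk out of `u` starts with the edge `uv`,
so `u` is never an inner vertex of a path: hence `uv` is monitored only by pairs containing `u`,
and `u` lies in every MEG-set. Moreover a shortest `u`–`y` path is `uv` followed by a shortest
`v`–`y` path, so `{u, y}` monitors everything `{v, y}` does. The only pair through `v` this cannot
replace is `{v, u}`, which monitors just `uv`; that edge is also monitored by `{u, w}` for any
`w ≠ u`, and since `G` has an edge avoiding `u` and `v`, the set `M` contains such a `w`. So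
`M \ {v}` is still a MEG-set.
-/

section

variable {V : Type*} {G : SimpleGraph V} {M : Set V} {u v w x y : V} {e : Sym2 V}

namespace SimpleGraph.Walk

lemma eq_cons_of_forall_adj_eq (huv : G.Adj u v) (hleaf : ∀ w, G.Adj u w → w = v)
    (p : G.Walk u y) (hy : y ≠ u) : ∃ q : G.Walk v y, p = cons huv q := by
  cases p with
  | nil => exact absurd rfl hy
  | cons h q =>
    obtain rfl := hleaf _ h
    exact ⟨q, rfl⟩

lemma mem_edges_of_forall_adj_eq (huv : G.Adj u v) (hleaf : ∀ w, G.Adj u w → w = v)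
    (p : G.Walk u y) (hy : y ≠ u) : s(u, v) ∈ p.edges := by
  obtain ⟨q, rfl⟩ := p.eq_cons_of_forall_adj_eq huv hleaf hy
  simp

lemma IsTrail.notMem_support_of_forall_adj_eq {p : G.Walk x y} (hp : p.IsTrail)
    (huv : G.Adj u v) (hleaf : ∀ w, G.Adj u w → w = v) (hx : x ≠ u) (hy : y ≠ u) :
    u ∉ p.support := by
  classical
  intro hu
  have hbefore : s(u, v) ∈ (p.takeUntil u hu).edges := by
    simpa [edges_reverse] using
      (p.takeUntil u hu).reverse.mem_edges_of_forall_adj_eq huv hleaf hx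
  exact hp.disjoint_edges_takeUntil_dropUntil hu hbefore
    ((p.dropUntil u hu).mem_edges_of_forall_adj_eq huv hleaf hy)

end SimpleGraph.Walk

lemma Monitors.symm (h : Monitors G x y e) : Monitors G y x e := by
  intro p hp hlen
  simpa [Walk.edges_reverse] using
    h p.reverse hp.reverse (by rw [Walk.length_reverse, hlen, dist_comm])

lemma not_monitors_self : ¬ Monitors G x x e := by
  intro h
  simpa using h Walk.nil Walk.IsPath.nil (by simp)

lemma Monitors.eq_of_adj (hxy : G.Adj x y) (h : Monitors G x y e) : e = s(x, y) := by
  have hpath : (Walk.cons hxy Walk.nil).IsPath := by simp [hxy.ne]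
  simpa using h _ hpath (by simp [dist_eq_one_iff_adj.mpr hxy])

lemma monitors_of_forall_adj_eq (huv : G.Adj u v) (hleaf : ∀ w, G.Adj u w → w = v)
    (hy : y ≠ u) : Monitors G u y s(u, v) :=
  fun p _ _ ↦ p.mem_edges_of_forall_adj_eq huv hleaf hy

lemma Monitors.eq_or_eq_of_forall_adj_eq (hxy : G.Reachable x y) (huv : G.Adj u v)
    (hleaf : ∀ w, G.Adj u w → w = v) (h : Monitors G x y s(u, v)) : x = u ∨ y = u := by
  obtain ⟨p, hp, hlen⟩ := hxy.exists_path_of_dist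
  by_contra! hne
  exact hp.isTrail.notMem_support_of_forall_adj_eq huv hleaf hne.1 hne.2
    (p.fst_mem_support_of_mem_edges (h p hp hlen))

lemma Monitors.of_forall_adj_eq (huv : G.Adj u v) (hleaf : ∀ w, G.Adj u w → w = v)
    (hy : y ≠ u) (h : Monitors G v y e) : Monitors G u y e := by
  intro p hp hlen
  obtain ⟨q, rfl⟩ := p.eq_cons_of_forall_adj_eq huv hleaf hy
  obtain ⟨r, -, hr⟩ := q.reachable.exists_path_of_dist
  have hshort : G.dist u y ≤ G.dist v y + 1 := by
    simpa [hr] using G.dist_le (Walk.cons huv r)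
  have hq : q.length = G.dist v y := le_antisymm (by simp at hlen; omega) (G.dist_le q)
  simpa using Or.inr (h q hp.of_cons hq)

lemma IsMEGSet.mem_of_forall_adj_eq (hG : G.Connected) (hM : IsMEGSet G M) (huv : G.Adj u v)
    (hleaf : ∀ w, G.Adj u w → w = v) : u ∈ M := by
  obtain ⟨x, hx, y, hy, h⟩ := hM s(u, v) huv
  rcases h.eq_or_eq_of_forall_adj_eq (hG x y) huv hleaf with rfl | rfl <;> assumption

lemma IsMEGSet.exists_mem_ne_ne [Fintype V] (hG : G.Connected) (hM : IsMEGSet G M)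
    (hcard : 3 ≤ Fintype.card V) (huv : G.Adj u v) : ∃ w ∈ M, w ≠ u ∧ w ≠ v := by
  classical
  obtain ⟨z, -, hz⟩ := Finset.exists_mem_notMem_of_card_lt_card
    (s := {u, v}) (t := Finset.univ) ((Finset.card_le_two).trans_lt hcard)
  have : Nontrivial V := ⟨⟨u, v, huv.ne⟩⟩
  obtain ⟨a, hza⟩ := exists_adj_iff_not_isIsolated.mpr (hG.preconnected.not_isIsolated z)
  have hne : s(z, a) ≠ s(u, v) := by
    intro h
    simp_all
  obtain ⟨x, hx, y, hy, h⟩ := hM s(z, a) hza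
  -- a pair inside `{u, v}` monitors nothing but `uv`
  by_contra! hsub
  have hx' : x = u ∨ x = v := by by_contra! hx'; exact hx'.2 (hsub x hx hx'.1)
  have hy' : y = u ∨ y = v := by by_contra! hy'; exact hy'.2 (hsub y hy hy'.1)
  rcases hx' with rfl | rfl <;> rcases hy' with rfl | rfl
  · exact not_monitors_self h
  · exact hne (h.eq_of_adj huv)
  · exact hne (h.symm.eq_of_adj huv)
  · exact not_monitors_self h

lemma Monitors.exists_diff_singleton_of_forall_adj_eq (h : Monitors G v y e)
    (huv : G.Adj u v) (hleaf : ∀ w, G.Adj u w → w = v) (huM : u ∈ M) (hwM : w ∈ M)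
    (hwu : w ≠ u) (hwv : w ≠ v) (hyM : y ∈ M) :
    ∃ a ∈ M \ {v}, ∃ b ∈ M \ {v}, Monitors G a b e := by
  have hyv : y ≠ v := by
    rintro rfl
    exact not_monitors_self h
  by_cases hyu : y = u
  · rw [hyu] at h
    have he : e = s(u, v) := by rw [h.eq_of_adj huv.symm, Sym2.eq_swap]
    exact ⟨u, ⟨huM, huv.ne⟩, w, ⟨hwM, hwv⟩, he ▸ monitors_of_forall_adj_eq huv hleaf hwu⟩
  · exact ⟨u, ⟨huM, huv.ne⟩, y, ⟨hyM, hyv⟩, h.of_forall_adj_eq huv hleaf hyu⟩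

lemma IsMEGSet.diff_singleton_of_forall_adj_eq (hM : IsMEGSet G M) (huv : G.Adj u v)
    (hleaf : ∀ w, G.Adj u w → w = v) (huM : u ∈ M) (hwM : w ∈ M) (hwu : w ≠ u) (hwv : w ≠ v) :
    IsMEGSet G (M \ {v}) := by
  intro e he
  obtain ⟨x, hx, y, hy, h⟩ := hM e he
  by_cases hxv : x = v
  · subst hxv
    exact h.exists_diff_singleton_of_forall_adj_eq huv hleaf huM hwM hwu hwv hy
  by_cases hyv : y = v
  · subst hyv
    exact h.symm.exists_diff_singleton_of_forall_adj_eq huv hleaf huM hwM hwu hwv hx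
  exact ⟨x, ⟨hx, hxv⟩, y, ⟨hy, hyv⟩, h⟩

end

theorem minimal_megSet_avoids_support {V : Type*} [Fintype V]
    (G : SimpleGraph V) [DecidableRel G.Adj] (hG : G.Connected)
    (hn : 3 ≤ Fintype.card V) (M : Set V) (hM : IsMEGSet G M)
    (hmin : ∀ x ∈ M, ¬ IsMEGSet G (M \ {x})) :
    ∀ u v : V, G.degree u = 1 → G.Adj u v → v ∉ M := by
  intro u v hu huv hvM
  obtain ⟨v', -, huniq⟩ := degree_eq_one_iff_existsUnique_adj.mp hu
  have hleaf : ∀ w, G.Adj u w → w = v := fun w hw ↦ (huniq w hw).trans (huniq v huv).symm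
  obtain ⟨w, hwM, hwu, hwv⟩ := hM.exists_mem_ne_ne hG hn huv
  exact hmin v hvM <| hM.diff_singleton_of_forall_adj_eq huv hleaf
    (hM.mem_of_forall_adj_eq hG huv hleaf) hwM hwu hwv
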